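/- arXiv:1905.13083 — 11 statements merged into one kernel-verified Lean document; each statement's English description precedes it below -/
import Mathlib

section
/- W maps S^{2,2} into itself: if (x,y,u,v) ∈ S^{2,2} then W(x,y,u,v) ∈ S^{2,2}, i.e., all coordinates of W(x,y,u,v) are nonnegative, sum to 1, and the pairs (x',y') and (u',v') are each nonzero. -/
noncomputable def Wop : ℝ × ℝ × ℝ × ℝ → ℝ × ℝ × ℝ × ℝ := fun p =>
  let x := p.1; let y := p.2.1; let u := p.2.2.1; let v := p.2.2.2
  ((2*x*u + y*u)/(4*(x+y)*(u+v)),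
   (6*x*v + 3*y*u + 4*y*v)/(12*(x+y)*(u+v)),
   (6*x*u + 6*x*v + 3*y*u + 4*y*v)/(12*(x+y)*(u+v)),
   (3*y*u + 4*y*v)/(12*(x+y)*(u+v)))

def S22 : Set (ℝ × ℝ × ℝ × ℝ) :=
  {p | 0 ≤ p.1 ∧ 0 ≤ p.2.1 ∧ 0 ≤ p.2.2.1 ∧ 0 ≤ p.2.2.2 ∧
       p.1 + p.2.1 + p.2.2.1 + p.2.2.2 = 1 ∧
       (p.1, p.2.1) ≠ (0, 0) ∧ (p.2.2.1, p.2.2.2) ≠ (0, 0)}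

theorem stmt1 : ∀ p ∈ S22, Wop p ∈ S22 := by
  rintro ⟨x, y, u, v⟩ ⟨hx, hy, hu, hv, hs, h1, h2⟩
  simp only [S22, Set.mem_setOf_eq, Wop] at *
  have ha : 0 < x + y := by
    rcases lt_or_eq_of_le hx with h | h
    · linarith
    rcases lt_or_eq_of_le hy with h' | h'
    · linarith
    · exfalso; exact h1 (by simp [← h, ← h'])
  have hb : 0 < u + v := by
    rcases lt_or_eq_of_le hu with h | h
    · linarith
    rcases lt_or_eq_of_le hv with h' | h'
    · linarith
    · exfalso; exact h2 (by simp [← h, ← h'])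
  have hd : (0:ℝ) < 12*(x+y)*(u+v) := by positivity
  have hd4 : (0:ℝ) < 4*(x+y)*(u+v) := by positivity
  refine ⟨?_, ?_, ?_, ?_, ?_, ?_, ?_⟩
  · exact div_nonneg (by nlinarith [mul_nonneg hx hu, mul_nonneg hy hu]) hd4.le
  · exact div_nonneg (by nlinarith [mul_nonneg hx hv, mul_nonneg hy hu, mul_nonneg hy hv]) hd.le
  · exact div_nonneg (by nlinarith [mul_nonneg hx hu, mul_nonneg hx hv, mul_nonneg hy hu, mul_nonneg hy hv]) hd.le
  · exact div_nonneg (by nlinarith [mul_nonneg hy hu, mul_nonneg hy hv]) hd.le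
  · field_simp
    ring
  · have hsum : (2*x*u + y*u)/(4*(x+y)*(u+v)) + (6*x*v + 3*y*u + 4*y*v)/(12*(x+y)*(u+v))
        = (6*x*u + 6*x*v + 6*y*u + 4*y*v)/(12*(x+y)*(u+v)) := by
      field_simp
      ring
    have hpos : 0 < (6*x*u + 6*x*v + 6*y*u + 4*y*v)/(12*(x+y)*(u+v)) := by
      apply div_pos _ hd
      rcases lt_or_eq_of_le hx with h | h
      · nlinarith [mul_pos h hb, mul_nonneg hy hu, mul_nonneg hy hv]
      · have hy' : 0 < y := by
          rcases lt_or_eq_of_le hy with h' | h'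
          · exact h'
          · exfalso; exact h1 (by simp [← h, ← h'])
        nlinarith [mul_pos hy' hb, mul_nonneg hx hu, mul_nonneg hx hv]
    intro heq
    rw [Prod.mk.injEq] at heq
    rw [heq.1, heq.2] at hsum
    rw [← hsum] at hpos
    simp at hpos
  · have hpos : 0 < (6*x*u + 6*x*v + 3*y*u + 4*y*v)/(12*(x+y)*(u+v)) := by
      apply div_pos _ hd
      nlinarith [mul_pos ha hb, mul_nonneg hx hu, mul_nonneg hx hv, mul_nonneg hy hv]
    intro heq
    rw [Prod.mk.injEq] at heq
    rw [heq.1] at hpos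
    simp at hpos
end

section
/- s₀ = (1/2, 0, 1/2, 0) is the unique fixed point of W in S^{2,2}. -/
theorem key_aux (x s : ℝ) (hs : 0 < s) (hs2 : s < 1/2) (hx : 0 < x) (hxs : x < s)
    (hA : (4*s-1)*x^2 + s*(2*s-3)*x + 2*s^2*(3*s-1) = 0)
    (hB : x^2 + s*(16*s^2-18*s+3)*x + 2*s^2*(1-s) = 0) : False := by
  nlinarith [sq_nonneg (x-s), sq_nonneg (x+s), sq_nonneg x, sq_nonneg s, mul_pos hs hx,
    sq_nonneg (x*s), mul_pos (mul_pos hs hs) hx, sq_nonneg (x - 2*s), sq_nonneg (x*s - s^2)]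

theorem stmt2 : ∀ p ∈ S22, (Wop p = p ↔ p = (1/2, 0, 1/2, 0)) := by
  rintro ⟨x, y, u, v⟩ ⟨hx, hy, hu, hv, hsum, hxy, huv⟩
  dsimp only at hx hy hu hv hsum hxy huv
  have hs : 0 < x + y := by
    rcases hx.lt_or_eq with h | h
    · linarith
    rcases hy.lt_or_eq with h' | h'
    · linarith
    · exact absurd (by rw [← h, ← h']) hxy
  have ht : 0 < u + v := by
    rcases hu.lt_or_eq with h | h
    · linarith
    rcases hv.lt_or_eq with h' | h'
    · linarith
    · exact absurd (by rw [← h, ← h']) huv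
  have hd4 : (4*(x+y)*(u+v)) ≠ 0 := by positivity
  have hd12 : (12*(x+y)*(u+v)) ≠ 0 := by positivity
  constructor
  · intro hW
    simp only [Wop, Prod.mk.injEq] at hW
    obtain ⟨e1, e2, e3, e4⟩ := hW
    rw [div_eq_iff hd4] at e1
    rw [div_eq_iff hd12] at e2
    rw [div_eq_iff hd12] at e3
    rw [div_eq_iff hd12] at e4
    -- derived identities
    have hyv : y * v = 3*(x+y)*(u+v)*((u+v) - (x+y)) := by
      linear_combination (1/2) * e3 + (1/2) * e4 + (3*(x+y)*(u+v)) * hsum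
    have hxeq : x = 2*(x+y)*(2*u - (u+v)) := by
      have h6 : x * (6*(u+v)) = (2*(x+y)*(2*u - (u+v))) * (6*(u+v)) := by
        linear_combination e3 - e4
      exact mul_right_cancel₀ (by positivity) h6
    have he1 : u*(x+(x+y)) = 4*(x+y)*(u+v)*x := by linear_combination e1
    rcases le_or_gt (u+v) (x+y) with hts | hst
    · -- t ≤ s case : y*v = 0
      have hyv0 : y * v = 0 := by
        have h1 : y * v ≤ 0 := by
          rw [hyv]
          have h2 : (u+v) - (x+y) ≤ 0 := by linarith
          nlinarith [mul_pos hs ht]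
        nlinarith [mul_nonneg hy hv]
      have hy0 : y = 0 := by
        rcases mul_eq_zero.mp hyv0 with h | h
        · exact h
        · -- v = 0 : then 3*y*u = 0, u > 0 forces y = 0
          have hu0 : 0 < u := by linarith
          have h3 : 3*(y*u) = 0 := by
            linear_combination e4 + (12*(x+y)*(u+v) - 4*y) * h
          have := mul_eq_zero.mp h3
          rcases this with h' | h'
          · norm_num at h'
          · rcases mul_eq_zero.mp h' with h'' | h''
            · exact h''
            · exact absurd h'' hu0.ne'
      subst hy0
      have hv0 : v = 0 := by
        have h12 : v * (12*(x+0)*(u+v)) = 0 := by linear_combination -e4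
        rcases mul_eq_zero.mp h12 with h | h
        · exact h
        · exact absurd h hd12
      subst hv0
      have hx0 : 0 < x := by linarith
      have hu0 : 0 < u := by linarith
      have hxu : x*u*(1-2*x) = 0 := by linear_combination (1/2) * e1
      have hx2 : x = 1/2 := by
        rcases mul_eq_zero.mp hxu with h | h
        · rcases mul_eq_zero.mp h with h' | h'
          · exact absurd h' hx0.ne'
          · exact absurd h' hu0.ne'
        · linarith
      have hu2 : u = 1/2 := by linarith
      simp [hx2, hu2]
    · -- s < t case : contradiction
      exfalso
      have hyvpos : 0 < y * v := by
        rw [hyv]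
        have h2 : 0 < (u+v) - (x+y) := by linarith
        positivity
      have hy0 : 0 < y := by
        rcases hy.lt_or_eq with h | h
        · exact h
        · exfalso; subst h; simp at hyvpos
      have hv0 : 0 < v := by
        rcases hv.lt_or_eq with h | h
        · exact h
        · exfalso; subst h; simp at hyvpos
      have hx0 : 0 < x := by
        rcases hx.lt_or_eq with h | h
        · exact h
        · exfalso
          subst h
          have hyu : y * u = 0 := by linear_combination e1
          have hu00 : u = 0 := by
            rcases mul_eq_zero.mp hyu with h' | h'
            · exact absurd h' hy0.ne'
            · exact h'
          subst hu00
          nlinarith [hyvpos, hxeq]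
      have hts : u + v = 1 - (x+y) := by linarith
      have hA : (4*(x+y)-1)*x^2 + (x+y)*(2*(x+y)-3)*x + 2*(x+y)^2*(3*(x+y)-1) = 0 := by
        have hAt : (u+v) * ((4*(x+y)-1)*x^2 + (x+y)*(2*(x+y)-3)*x + 2*(x+y)^2*(3*(x+y)-1)) = 0 := by
          linear_combination (x+(x+y)) * hyv + y * he1 + (3*(x+y)*(u+v)*(x+(x+y))) * hts
        rcases mul_eq_zero.mp hAt with h | h
        · exact absurd h ht.ne'
        · exact h
      have hB : x^2 + (x+y)*(16*(x+y)^2-18*(x+y)+3)*x + 2*(x+y)^2*(1-(x+y)) = 0 := by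
        linear_combination (4*(x+y)) * he1 + (x+(x+y)) * hxeq +
          (16*(x+y)^2*x - 2*(x+y)*x - 2*(x+y)^2) * hts
      exact key_aux x (x+y) hs (by linarith) hx0 (by linarith) hA hB
  · intro h
    rw [Prod.mk.injEq, Prod.mk.injEq, Prod.mk.injEq] at h
    obtain ⟨h1, h2, h3, h4⟩ := h
    subst h1; subst h2; subst h3; subst h4
    simp only [Wop, Prod.mk.injEq]
    norm_num
end

section
/- For any (x,y,u,v) ∈ S^{2,2}, if (x',y',u',v') = W(x,y,u,v), then x' ≤ u', y' ≤ u', and v' ≤ y'. -/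
theorem stmt3 : ∀ p ∈ S22,
    (Wop p).1 ≤ (Wop p).2.2.1 ∧ (Wop p).2.1 ≤ (Wop p).2.2.1 ∧
    (Wop p).2.2.2 ≤ (Wop p).2.1 := by
  rintro ⟨x, y, u, v⟩ ⟨hx, hy, hu, hv, _, hxy, huv⟩
  have hxy' : 0 < x + y := by
    rcases lt_or_eq_of_le hx with h | h
    · linarith
    · rcases lt_or_eq_of_le hy with h' | h'
      · linarith
      · exact absurd (by rw [← h, ← h']) hxy
  have huv' : 0 < u + v := by
    rcases lt_or_eq_of_le hu with h | h
    · linarith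
    · rcases lt_or_eq_of_le hv with h' | h'
      · linarith
      · exact absurd (by rw [← h, ← h']) huv
  have hD : (0:ℝ) < 12*(x+y)*(u+v) := by positivity
  simp only [Wop]
  refine ⟨?_, ?_, ?_⟩ <;> rw [div_le_div_iff₀ (by positivity) hD] <;>
    nlinarith [mul_nonneg hx hv, mul_nonneg hy hv, mul_nonneg hx hu, mul_nonneg hy hu,
      mul_pos hxy' huv']
end

section
/- For any (x,y,u,v) ∈ S^{2,2} with v ≤ y ≤ u and x ≤ u, the image (x',y',u',v') = W(x,y,u,v) satisfies u/(4(u+v)) ≤ x' ≤ u/(2(u+v)), and hence 1/8 ≤ x' ≤ 1/2. -/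
theorem stmt4 : ∀ p ∈ S22, p.2.2.2 ≤ p.2.1 → p.2.1 ≤ p.2.2.1 → p.1 ≤ p.2.2.1 →
    (p.2.2.1 / (4*(p.2.2.1 + p.2.2.2)) ≤ (Wop p).1 ∧
     (Wop p).1 ≤ p.2.2.1 / (2*(p.2.2.1 + p.2.2.2)) ∧
     1/8 ≤ (Wop p).1 ∧ (Wop p).1 ≤ 1/2) := by
  rintro ⟨x, y, u, v⟩ ⟨hx, hy, hu, hv, hsum, hxy0, huv0⟩ hvy hyu hxu
  simp only [S22, Wop, Set.mem_setOf_eq] at *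
  have hxy : 0 < x + y := by
    rcases lt_or_eq_of_le hx with h | h
    · linarith
    · rcases lt_or_eq_of_le hy with h' | h'
      · linarith
      · exact absurd (Prod.ext h.symm h'.symm) hxy0
  have huv : 0 < u + v := by
    rcases lt_or_eq_of_le hu with h | h
    · linarith
    · rcases lt_or_eq_of_le hv with h' | h'
      · linarith
      · exact absurd (Prod.ext h.symm h'.symm) huv0
  have h1 : u / (4*(u + v)) ≤ (2*x*u + y*u)/(4*(x+y)*(u+v)) := by
    rw [div_le_div_iff₀ (by positivity) (by positivity)]
    nlinarith [mul_nonneg hx hu, mul_nonneg hy hu]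
  have h2 : (2*x*u + y*u)/(4*(x+y)*(u+v)) ≤ u / (2*(u + v)) := by
    rw [div_le_div_iff₀ (by positivity) (by positivity)]
    nlinarith [mul_nonneg hy hu]
  refine ⟨h1, h2, le_trans ?_ h1, le_trans h2 ?_⟩
  · rw [le_div_iff₀ (by positivity)]; nlinarith
  · rw [div_le_iff₀ (by positivity)]; nlinarith
end

section
/- For any (x,y,u,v) ∈ S^{2,2} with v ≤ y ≤ u and x ≤ u, the image (x',y',u',v') = W(x,y,u,v) satisfies v/(3(u+v)) ≤ y' ≤ (u+2v)/(4(u+v)), and hence 0 ≤ y' ≤ 1/2. -/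
theorem stmt5 : ∀ p ∈ S22, p.2.2.2 ≤ p.2.1 → p.2.1 ≤ p.2.2.1 → p.1 ≤ p.2.2.1 →
    (p.2.2.2 / (3*(p.2.2.1 + p.2.2.2)) ≤ (Wop p).2.1 ∧
     (Wop p).2.1 ≤ (p.2.2.1 + 2*p.2.2.2) / (4*(p.2.2.1 + p.2.2.2)) ∧
     0 ≤ (Wop p).2.1 ∧ (Wop p).2.1 ≤ 1/2) := by
  rintro ⟨x, y, u, v⟩ ⟨hx, hy, hu, hv, hsum, hxy, huv⟩ h1 h2 h3
  simp only [Wop, S22] at *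
  have hxy' : 0 < x + y := by
    rcases lt_or_eq_of_le hx with h | h
    · linarith
    · rcases lt_or_eq_of_le hy with h' | h'
      · linarith
      · exact absurd (by simp [← h, ← h']) hxy
  have huv' : 0 < u + v := by
    rcases lt_or_eq_of_le hu with h | h
    · linarith
    · rcases lt_or_eq_of_le hv with h' | h'
      · linarith
      · exact absurd (by simp [← h, ← h']) huv
  have hd : (0:ℝ) < 12*(x+y)*(u+v) := by positivity
  have hlo : v / (3*(u+v)) ≤ (6*x*v + 3*y*u + 4*y*v)/(12*(x+y)*(u+v)) := by
    rw [div_le_div_iff₀ (by positivity) hd]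
    nlinarith [mul_nonneg hx hv, mul_nonneg hy hu, mul_nonneg (mul_nonneg hx hv) huv'.le,
      mul_nonneg (mul_nonneg hy hu) huv'.le]
  have hhi : (6*x*v + 3*y*u + 4*y*v)/(12*(x+y)*(u+v)) ≤ (u + 2*v) / (4*(u+v)) := by
    rw [div_le_div_iff₀ hd (by positivity)]
    nlinarith [mul_nonneg hy hv, mul_nonneg hx hu, mul_nonneg (mul_nonneg hy hv) huv'.le,
      mul_nonneg (mul_nonneg hx hu) huv'.le]
  refine ⟨hlo, hhi, le_trans (by positivity) hlo, hhi.trans ?_⟩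
  rw [div_le_div_iff₀ (by positivity) (by norm_num)]
  nlinarith
end

section
/- For any (x,y,u,v) ∈ S^{2,2}, the image (x',y',u',v') = W(x,y,u,v) satisfies (2x+y)/(4(x+y)) ≤ u' ≤ (3x+2y)/(6(x+y)), and hence 1/4 ≤ u' ≤ 1/2. -/
theorem stmt6 : ∀ p ∈ S22,
    ((2*p.1 + p.2.1) / (4*(p.1 + p.2.1)) ≤ (Wop p).2.2.1 ∧
     (Wop p).2.2.1 ≤ (3*p.1 + 2*p.2.1) / (6*(p.1 + p.2.1)) ∧
     1/4 ≤ (Wop p).2.2.1 ∧ (Wop p).2.2.1 ≤ 1/2) := by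
  rintro ⟨x, y, u, v⟩ ⟨hx, hy, hu, hv, hsum, hxy, huv⟩
  simp only [Wop]
  have hs : 0 < x + y := by
    rcases lt_or_eq_of_le hx with h | h
    · linarith
    · rcases lt_or_eq_of_le hy with h' | h'
      · linarith
      · exact absurd (by exact Prod.ext h.symm h'.symm : ((x:ℝ), (y:ℝ)) = (0,0)) hxy
  have ht : 0 < u + v := by
    rcases lt_or_eq_of_le hu with h | h
    · linarith
    · rcases lt_or_eq_of_le hv with h' | h'
      · linarith
      · exact absurd (by exact Prod.ext h.symm h'.symm : ((u:ℝ), (v:ℝ)) = (0,0)) huv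
  have h1 : (2*x + y) / (4*(x + y)) ≤ (6*x*u + 6*x*v + 3*y*u + 4*y*v)/(12*(x+y)*(u+v)) := by
    rw [div_le_div_iff₀ (by linarith) (by positivity)]
    nlinarith [mul_nonneg hy hv, mul_pos hs ht]
  have h2 : (6*x*u + 6*x*v + 3*y*u + 4*y*v)/(12*(x+y)*(u+v)) ≤ (3*x + 2*y) / (6*(x + y)) := by
    rw [div_le_div_iff₀ (by positivity) (by linarith)]
    nlinarith [mul_nonneg hy hu, mul_pos hs ht]
  have h3 : (1:ℝ)/4 ≤ (2*x + y) / (4*(x + y)) := by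
    rw [div_le_div_iff₀ (by norm_num) (by linarith)]
    linarith
  have h4 : (3*x + 2*y) / (6*(x + y)) ≤ 1/2 := by
    rw [div_le_div_iff₀ (by linarith) (by norm_num)]
    linarith
  exact ⟨h1, h2, le_trans h3 h1, le_trans h2 h4⟩
end

section
/- For any (x,y,u,v) ∈ S^{2,2}, the image (x',y',u',v') = W(x,y,u,v) satisfies y/(4(x+y)) ≤ v' ≤ y/(3(x+y)), and hence 0 ≤ v' ≤ 1/3. -/
theorem stmt7 : ∀ p ∈ S22,
    (p.2.1 / (4*(p.1 + p.2.1)) ≤ (Wop p).2.2.2 ∧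
     (Wop p).2.2.2 ≤ p.2.1 / (3*(p.1 + p.2.1)) ∧
     0 ≤ (Wop p).2.2.2 ∧ (Wop p).2.2.2 ≤ 1/3) := by
  rintro ⟨x, y, u, v⟩ ⟨hx, hy, hu, hv, hsum, hxy, huv⟩
  dsimp only at hx hy hu hv hsum hxy huv
  simp only [ne_eq, Prod.mk.injEq, not_and] at hxy huv
  simp only [Wop]
  have hs : 0 < x + y := by
    rcases (add_nonneg hx hy).lt_or_eq with h | h
    · exact h
    · exact absurd (by linarith : y = 0) (hxy (by linarith))
  have ht : 0 < u + v := by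
    rcases (add_nonneg hu hv).lt_or_eq with h | h
    · exact h
    · exact absurd (by linarith : v = 0) (huv (by linarith))
  have h1 : y / (4*(x+y)) ≤ (3*y*u + 4*y*v)/(12*(x+y)*(u+v)) := by
    rw [div_le_div_iff₀ (by positivity) (by positivity)]
    nlinarith [mul_nonneg hy hv, mul_nonneg (mul_nonneg hy hv) hs.le]
  have h2 : (3*y*u + 4*y*v)/(12*(x+y)*(u+v)) ≤ y / (3*(x+y)) := by
    rw [div_le_div_iff₀ (by positivity) (by positivity)]
    nlinarith [mul_nonneg hy hu, mul_nonneg (mul_nonneg hy hu) hs.le]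
  have h3 : (0:ℝ) ≤ y / (4*(x+y)) := by positivity
  have h4 : y / (3*(x+y)) ≤ 1/3 := by
    rw [div_le_div_iff₀ (by positivity) (by norm_num)]
    linarith
  exact ⟨h1, h2, le_trans h3 h1, le_trans h2 h4⟩
end

section
/- If a, b are real numbers with 0 ≤ b ≤ a and a + b = (6b + 3a + 4ab)/(6 + 3a) + (3a + 4ab)/(6 + 6b + 3a + 4ab), then a = b = 0. -/
theorem stmt11 (a b : ℝ) (hb : 0 ≤ b) (hba : b ≤ a)
    (h : a + b = (6*b + 3*a + 4*a*b)/(6 + 3*a) +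
      (3*a + 4*a*b)/(6 + 6*b + 3*a + 4*a*b)) :
    a = 0 ∧ b = 0 := by
  have ha : 0 ≤ a := le_trans hb hba
  have d1 : (0:ℝ) < 6 + 3*a := by nlinarith
  have d2 : (0:ℝ) < 6 + 6*b + 3*a + 4*a*b := by nlinarith
  field_simp at h
  constructor <;> nlinarith [sq_nonneg a, sq_nonneg b, sq_nonneg (a-b), sq_nonneg (a+b), mul_nonneg ha hb, mul_nonneg (mul_nonneg ha ha) hb, mul_nonneg (mul_nonneg ha hb) hb, sq_nonneg (a*b)]
end

section
/- For any initial point s ∈ S^{2,2}, the orbit under W converges: lim_{m→∞} W^m(s) = (1/2, 0, 1/2, 0). -/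
noncomputable def G2 : ℝ × ℝ → ℝ × ℝ := fun c =>
  ((3*c.1 + 6*c.2 - 5*c.1*c.2)/(2*(3 - c.1*c.2)), c.1*(3 + c.2)/(2*(3 + c.1*c.2)))

noncomputable def Phi : ℝ × ℝ → ℝ × ℝ × ℝ × ℝ := fun c =>
  ((1-c.2)*(2-c.1)/4, (3*c.1+6*c.2-5*c.1*c.2)/12, (6-3*c.1+c.1*c.2)/12, c.1*(3+c.2)/12)

def Dom : Set (ℝ × ℝ) := {c | 0 ≤ c.1 ∧ c.1 ≤ 1 ∧ 0 ≤ c.2 ∧ c.2 ≤ 1}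

lemma WPhi (s : ℝ × ℝ × ℝ × ℝ) (h1 : 0 < s.1 + s.2.1) (h2 : 0 < s.2.2.1 + s.2.2.2) :
    Wop s = Phi (s.2.1/(s.1 + s.2.1), s.2.2.2/(s.2.2.1 + s.2.2.2)) := by
  obtain ⟨x, y, u, v⟩ := s
  simp only [Wop, Phi] at *
  have h1' : x + y ≠ 0 := ne_of_gt h1
  have h2' : u + v ≠ 0 := ne_of_gt h2
  refine Prod.ext ?_ (Prod.ext ?_ (Prod.ext ?_ ?_)) <;> · simp only; field_simp; ring

lemma GDom {c : ℝ × ℝ} (hc : c ∈ Dom) : G2 c ∈ Dom := by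
  obtain ⟨a, b⟩ := c
  obtain ⟨ha0, ha1, hb0, hb1⟩ := hc
  simp only [Dom, G2, Set.mem_setOf_eq] at *
  have hd1 : (0:ℝ) < 2*(3 - a*b) := by nlinarith
  have hd2 : (0:ℝ) < 2*(3 + a*b) := by nlinarith
  refine ⟨?_, ?_, ?_, ?_⟩
  · apply div_nonneg _ (le_of_lt hd1); nlinarith
  · rw [div_le_one hd1]; nlinarith
  · apply div_nonneg _ (le_of_lt hd2); nlinarith
  · rw [div_le_one hd2]; nlinarith

lemma WopPhi {c : ℝ × ℝ} (hc : c ∈ Dom) : Wop (Phi c) = Phi (G2 c) := by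
  obtain ⟨a, b⟩ := c
  obtain ⟨ha0, ha1, hb0, hb1⟩ := hc
  have hd1 : (0:ℝ) < 3 - a*b := by nlinarith
  have hd2 : (0:ℝ) < 3 + a*b := by nlinarith
  have hxy : (Phi (a,b)).1 + (Phi (a,b)).2.1 = (3 - a*b)/6 := by
    simp only [Phi]; ring
  have huv : (Phi (a,b)).2.2.1 + (Phi (a,b)).2.2.2 = (3 + a*b)/6 := by
    simp only [Phi]; ring
  rw [WPhi (Phi (a,b)) (by rw [hxy]; positivity) (by rw [huv]; positivity)]
  congr 1
  rw [hxy, huv]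
  simp only [Phi, G2]
  refine Prod.ext ?_ ?_ <;> · simp only; field_simp; ring

lemma hDecrease {c : ℝ × ℝ} (hc : c ∈ Dom) :
    (G2 c).1 + (G2 c).2 ≤ c.1 + c.2 - c.1*c.2/9 := by
  obtain ⟨a, b⟩ := c
  obtain ⟨ha0, ha1, hb0, hb1⟩ := hc
  have hd1 : (0:ℝ) < 2*(3 - a*b) := by nlinarith
  have hd2 : (0:ℝ) < 2*(3 + a*b) := by nlinarith
  simp only [G2] at *
  rw [div_add_div _ _ (ne_of_gt hd1) (ne_of_gt hd2), div_le_iff₀ (by positivity)]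
  nlinarith [mul_nonneg ha0 hb0, mul_nonneg (mul_nonneg ha0 hb0) (mul_nonneg ha0 hb0),
    mul_nonneg (mul_nonneg ha0 ha0) hb0, mul_nonneg (mul_nonneg ha0 hb0) hb0,
    mul_nonneg ha0 (sub_nonneg.2 hb1), mul_nonneg hb0 (sub_nonneg.2 ha1),
    mul_nonneg (mul_nonneg ha0 hb0) (sub_nonneg.2 hb1),
    mul_nonneg (mul_nonneg ha0 hb0) (sub_nonneg.2 ha1),
    mul_nonneg (mul_nonneg (mul_nonneg ha0 hb0) ha0) (sub_nonneg.2 hb1),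
    mul_nonneg (mul_nonneg (mul_nonneg ha0 hb0) hb0) (sub_nonneg.2 ha1)]

lemma bLower {c : ℝ × ℝ} (hc : c ∈ Dom) : 3*c.1/8 ≤ (G2 c).2 := by
  obtain ⟨a, b⟩ := c
  obtain ⟨ha0, ha1, hb0, hb1⟩ := hc
  have hd2 : (0:ℝ) < 2*(3 + a*b) := by nlinarith
  simp only [G2] at *
  rw [div_le_div_iff₀ (by norm_num) hd2]
  nlinarith [mul_nonneg (mul_nonneg ha0 hb0) (sub_nonneg.2 ha1)]

lemma aLower {c : ℝ × ℝ} (hc : c ∈ Dom) : (c.1 + c.2)/6 ≤ (G2 c).1 := by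
  obtain ⟨a, b⟩ := c
  obtain ⟨ha0, ha1, hb0, hb1⟩ := hc
  have hd1 : (0:ℝ) < 2*(3 - a*b) := by nlinarith
  simp only [G2] at *
  rw [div_le_div_iff₀ (by norm_num) hd1]
  nlinarith [mul_nonneg hb0 (sub_nonneg.2 ha1), mul_nonneg (mul_nonneg ha0 ha0) hb0,
    mul_nonneg (mul_nonneg ha0 hb0) hb0]

lemma seq_to_zero (H : ℕ → ℝ) (hnn : ∀ k, 0 ≤ H k) (h0 : H 0 ≤ 2)
    (hstep : ∀ k, H (k+1) ≤ H k - (H k)^2/864) :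
    Filter.Tendsto H Filter.atTop (nhds 0) := by
  have key : ∀ k : ℕ, H k * ((k : ℝ) + 432) ≤ 864 := by
    intro k
    induction k with
    | zero => simpa using by nlinarith [hnn 0]
    | succ n ih =>
      have hn : (0:ℝ) ≤ (n:ℝ) := Nat.cast_nonneg n
      have h2 : H n ≤ 2 := by nlinarith [hnn n]
      have hs := hstep n
      have hn1 := hnn (n+1)
      push_cast
      nlinarith [mul_nonneg (sub_nonneg.2 ih) (by linarith : (0:ℝ) ≤ 864 - H n),
        sq_nonneg (H n), mul_nonneg (hnn n) hn]
  have hbound : ∀ k : ℕ, H k ≤ 864 / ((k : ℝ) + 432) := by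
    intro k
    rw [le_div_iff₀ (by positivity)]
    exact key k
  have hg : Filter.Tendsto (fun k : ℕ => 864 / ((k : ℝ) + 432)) Filter.atTop (nhds 0) := by
    apply Filter.Tendsto.div_atTop tendsto_const_nhds
    exact Filter.tendsto_atTop_add_const_right _ 432 tendsto_natCast_atTop_atTop
  exact squeeze_zero hnn hbound hg

theorem stmt17 : ∀ s ∈ S22,
    Filter.Tendsto (fun m => Wop^[m] s) Filter.atTop
      (nhds ((1/2 : ℝ), (0 : ℝ), (1/2 : ℝ), (0 : ℝ))) := by
  intro s hs
  obtain ⟨x, y, u, v⟩ := s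
  obtain ⟨hx, hy, hu, hv, hsum, hne1, hne2⟩ := hs
  simp only at hx hy hu hv hne1 hne2
  have hxy : 0 < x + y := by
    rcases lt_or_eq_of_le (by linarith : (0:ℝ) ≤ x + y) with h | h
    · exact h
    · exact absurd (Prod.ext (by linarith : x = 0) (by linarith : y = 0)) hne1
  have huv : 0 < u + v := by
    rcases lt_or_eq_of_le (by linarith : (0:ℝ) ≤ u + v) with h | h
    · exact h
    · exact absurd (Prod.ext (by linarith : u = 0) (by linarith : v = 0)) hne2
  have hc₀ : (y/(x+y), v/(u+v)) ∈ Dom := by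
    refine ⟨div_nonneg hy hxy.le, ?_, div_nonneg hv huv.le, ?_⟩
    · rw [div_le_one hxy]; linarith
    · rw [div_le_one huv]; linarith
  have key : ∀ m : ℕ, G2^[m] (y/(x+y), v/(u+v)) ∈ Dom ∧
      Wop^[m+1] (x,y,u,v) = Phi (G2^[m] (y/(x+y), v/(u+v))) := by
    intro m
    induction m with
    | zero =>
      refine ⟨hc₀, ?_⟩
      simpa using WPhi (x,y,u,v) hxy huv
    | succ n ih =>
      obtain ⟨hmem, heq⟩ := ih
      constructor
      · rw [Function.iterate_succ_apply' G2]; exact GDom hmem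
      · rw [Function.iterate_succ_apply' Wop, heq, Function.iterate_succ_apply' G2]
        exact WopPhi hmem
  set A : ℕ → ℝ × ℝ := fun m => G2^[m] (y/(x+y), v/(u+v)) with hAdef
  have hdom : ∀ m, A m ∈ Dom := fun m => (key m).1
  have keyW : ∀ m, Wop^[m+1] (x,y,u,v) = Phi (A m) := fun m => (key m).2
  have hAsucc : ∀ m, A (m+1) = G2 (A m) := fun m =>
    Function.iterate_succ_apply' G2 m (y/(x+y), v/(u+v))
  set h : ℕ → ℝ := fun m => (A m).1 + (A m).2 with hhdef
  clear_value h A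
  clear key hc₀
  have hh : ∀ m, h m = (A m).1 + (A m).2 := fun m => by rw [hhdef]
  have hnn : ∀ m, 0 ≤ h m := fun m => by
    rw [hh m]; have := hdom m; exact add_nonneg this.1 this.2.2.1
  have hle : ∀ m, (A m).1 ≤ h m ∧ (A m).2 ≤ h m := fun m => by
    rw [hh m]; have := hdom m
    exact ⟨by linarith [this.2.2.1], by linarith [this.1]⟩
  have hmono : ∀ m, h (m+1) ≤ h m := by
    intro m
    have h1 := hDecrease (hdom m)
    have h2 := mul_nonneg (hdom m).1 (hdom m).2.2.1
    rw [hh (m+1), hh m, hAsucc m]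
    linarith
  have hstep : ∀ k, h (k+1+2) ≤ h (k+2) - (h (k+2))^2/864 := by
    intro k
    rw [show k+1+2 = k+2+1 from by omega]
    have haL : h (k+1) / 6 ≤ (A (k+2)).1 := by
      have := aLower (hdom (k+1))
      rwa [← hAsucc (k+1), show k+1+1 = k+2 from by omega, ← hh (k+1)] at this
    have hbL : 3 * (A (k+1)).1 / 8 ≤ (A (k+2)).2 := by
      have := bLower (hdom (k+1))
      rwa [← hAsucc (k+1), show k+1+1 = k+2 from by omega] at this
    have haL' : h k / 6 ≤ (A (k+1)).1 := by
      have := aLower (hdom k)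
      rwa [← hAsucc k, ← hh k] at this
    have hdec := hDecrease (hdom (k+2))
    rw [← hAsucc (k+2)] at hdec
    have hm1 : h (k+2) ≤ h (k+1) := by
      have := hmono (k+1); rwa [show k+1+1 = k+2 from by omega] at this
    have hm2 : h (k+1) ≤ h k := hmono k
    have hnn2 := hnn (k+2)
    have ha2 : h (k+2) / 6 ≤ (A (k+2)).1 := le_trans (by linarith) haL
    have hb2 : h (k+2) / 16 ≤ (A (k+2)).2 := by
      calc h (k+2) / 16 ≤ h k / 16 := by linarith
      _ ≤ 3 * (A (k+1)).1 / 8 := by linarith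
      _ ≤ (A (k+2)).2 := hbL
    have hprod : (h (k+2))^2 / 96 ≤ (A (k+2)).1 * (A (k+2)).2 := by
      nlinarith [mul_nonneg (sub_nonneg.2 ha2) (sub_nonneg.2 hb2),
        mul_nonneg hnn2 (sub_nonneg.2 ha2), mul_nonneg hnn2 (sub_nonneg.2 hb2)]
    rw [hh (k+2+1)]
    nlinarith [hdec, hprod, hh (k+2)]
  have hH : Filter.Tendsto (fun k => h (k+2)) Filter.atTop (nhds 0) := by
    apply seq_to_zero _ (fun k => hnn (k+2)) ?_ hstep
    have := hdom 2
    show h 2 ≤ 2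
    rw [hh 2]; linarith [this.2.1, this.2.2.2]
  have hh0 : Filter.Tendsto h Filter.atTop (nhds 0) :=
    (Filter.tendsto_add_atTop_iff_nat 2).mp hH
  have ha0 : Filter.Tendsto (fun m => (A m).1) Filter.atTop (nhds 0) :=
    squeeze_zero (fun m => (hdom m).1) (fun m => (hle m).1) hh0
  have hb0 : Filter.Tendsto (fun m => (A m).2) Filter.atTop (nhds 0) :=
    squeeze_zero (fun m => (hdom m).2.2.1) (fun m => (hle m).2) hh0
  have hA0 : Filter.Tendsto A Filter.atTop (nhds ((0:ℝ), (0:ℝ))) := by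
    have := Filter.Tendsto.prodMk_nhds ha0 hb0
    simpa using this
  have hPhiCont : Continuous Phi := by unfold Phi; fun_prop
  have hPhiA : Filter.Tendsto (fun m => Phi (A m)) Filter.atTop (nhds (Phi (0,0))) :=
    (hPhiCont.tendsto _).comp hA0
  have hPhi00 : Phi ((0:ℝ), (0:ℝ)) = ((1/2 : ℝ), (0 : ℝ), (1/2 : ℝ), (0 : ℝ)) := by
    simp only [Phi]; norm_num
  rw [hPhi00] at hPhiA
  have hfinal : Filter.Tendsto (fun m => Wop^[m+1] (x,y,u,v)) Filter.atTop
      (nhds ((1/2 : ℝ), (0 : ℝ), (1/2 : ℝ), (0 : ℝ))) := by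
    have heq : (fun m => Wop^[m+1] (x,y,u,v)) = fun m => Phi (A m) := funext keyW
    rw [heq]; exact hPhiA
  exact (Filter.tendsto_add_atTop_iff_nat 1).mp hfinal
end

section
/- For any s ∈ S^{2,2} and m ≥ 2, writing W^m(s) = (x^{(m)}, y^{(m)}, u^{(m)}, v^{(m)}), the ratios satisfy 0 ≤ y^{(m)}/x^{(m)} ≤ 4 and 0 ≤ v^{(m)}/u^{(m)} ≤ 1 (in particular x^{(m)} > 0 and u^{(m)} > 0). -/
def Pset : Set (ℝ × ℝ × ℝ × ℝ) :=
  {p | 0 < p.1 ∧ 0 ≤ p.2.1 ∧ 0 < p.2.2.1 ∧ 0 ≤ p.2.2.2 ∧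
       p.2.2.2 ≤ p.2.2.1 ∧ p.2.1 ≤ 4 * p.1}

def Qset : Set (ℝ × ℝ × ℝ × ℝ) :=
  {p | 0 ≤ p.1 ∧ 0 ≤ p.2.1 ∧ 0 < p.1 + p.2.1 ∧ 0 < p.2.2.1 ∧ 0 ≤ p.2.2.2 ∧
       p.2.2.2 ≤ p.2.2.1}

lemma Q_to_P : ∀ p ∈ Qset, Wop p ∈ Pset := by
  rintro ⟨x, y, u, v⟩ hp
  simp only [Qset, Set.mem_setOf_eq] at hp
  obtain ⟨hx, hy, hxy, hu, hv, hvu⟩ := hp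
  have huv : 0 < u + v := by linarith
  have hD : 0 < 12 * (x + y) * (u + v) := by positivity
  have hD4 : 0 < 4 * (x + y) * (u + v) := by positivity
  simp only [Pset, Set.mem_setOf_eq, Wop]
  refine ⟨?_, ?_, ?_, ?_, ?_, ?_⟩
  · exact div_pos (by nlinarith) hD4
  · exact div_nonneg (by nlinarith) hD.le
  · exact div_pos (by nlinarith) hD
  · exact div_nonneg (by nlinarith) hD.le
  · rw [div_le_div_iff₀ hD hD]
    exact mul_le_mul_of_nonneg_right (by nlinarith) hD.le
  · rw [← mul_div_assoc, div_le_div_iff₀ hD hD4]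
    have hnum : 6*x*v + 3*y*u + 4*y*v ≤ 12 * (2*x*u + y*u) := by nlinarith
    calc (6*x*v + 3*y*u + 4*y*v) * (4*(x+y)*(u+v))
        ≤ (12 * (2*x*u + y*u)) * (4*(x+y)*(u+v)) := mul_le_mul_of_nonneg_right hnum hD4.le
      _ = 4 * (2*x*u + y*u) * (12*(x+y)*(u+v)) := by ring

lemma P_sub_Q : Pset ⊆ Qset := by
  rintro ⟨x, y, u, v⟩ hp
  simp only [Pset, Set.mem_setOf_eq] at hp
  obtain ⟨hx, hy, hu, hv, hvu, _⟩ := hp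
  exact ⟨hx.le, hy, by dsimp; linarith, hu, hv, hvu⟩

lemma S_to_Q : ∀ s ∈ S22, Wop s ∈ Qset := by
  rintro ⟨x, y, u, v⟩ hs
  simp only [S22, Set.mem_setOf_eq] at hs
  obtain ⟨hx, hy, hu, hv, _, hxy0, huv0⟩ := hs
  have hxy : 0 < x + y := by
    rcases lt_or_eq_of_le hx with h | h
    · linarith
    · rcases lt_or_eq_of_le hy with h' | h'
      · linarith
      · exact absurd (by rw [← h, ← h']) hxy0
  have huv : 0 < u + v := by
    rcases lt_or_eq_of_le hu with h | h
    · linarith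
    · rcases lt_or_eq_of_le hv with h' | h'
      · linarith
      · exact absurd (by rw [← h, ← h']) huv0
  have hD : 0 < 12 * (x + y) * (u + v) := by positivity
  have hD4 : 0 < 4 * (x + y) * (u + v) := by positivity
  simp only [Qset, Set.mem_setOf_eq, Wop]
  refine ⟨div_nonneg (by nlinarith) hD4.le, div_nonneg (by nlinarith) hD.le, ?_, ?_,
    div_nonneg (by nlinarith) hD.le, ?_⟩
  · rcases lt_or_eq_of_le hu with h | h
    · have h1 : 0 < (2*x*u + y*u)/(4*(x+y)*(u+v)) := div_pos (by nlinarith) hD4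
      have h2 : 0 ≤ (6*x*v + 3*y*u + 4*y*v)/(12*(x+y)*(u+v)) := div_nonneg (by nlinarith) hD.le
      exact add_pos_of_pos_of_nonneg h1 h2
    · have hv' : 0 < v := by linarith
      have h2 : 0 < (6*x*v + 3*y*u + 4*y*v)/(12*(x+y)*(u+v)) := div_pos (by nlinarith) hD
      have h1 : 0 ≤ (2*x*u + y*u)/(4*(x+y)*(u+v)) := div_nonneg (by nlinarith) hD4.le
      exact add_pos_of_nonneg_of_pos h1 h2
  · apply div_pos ?_ hD
    rcases lt_or_eq_of_le hu with h | h
    · nlinarith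
    · have hv' : 0 < v := by linarith
      nlinarith
  · rw [div_le_div_iff₀ hD hD]
    exact mul_le_mul_of_nonneg_right (by nlinarith) hD.le

lemma P_invariant : ∀ p ∈ Pset, Wop p ∈ Pset := fun p hp => Q_to_P p (P_sub_Q hp)

lemma P_iter : ∀ n : ℕ, ∀ p ∈ Pset, Wop^[n] p ∈ Pset := by
  intro n
  induction n with
  | zero => intro p hp; simpa using hp
  | succ k ih =>
    intro p hp
    rw [Function.iterate_succ_apply]
    exact ih _ (P_invariant p hp)

theorem stmt18 : ∀ s ∈ S22, ∀ m : ℕ, 2 ≤ m →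
    0 < (Wop^[m] s).1 ∧ 0 < (Wop^[m] s).2.2.1 ∧
    0 ≤ (Wop^[m] s).2.1 / (Wop^[m] s).1 ∧ (Wop^[m] s).2.1 / (Wop^[m] s).1 ≤ 4 ∧
    0 ≤ (Wop^[m] s).2.2.2 / (Wop^[m] s).2.2.1 ∧
    (Wop^[m] s).2.2.2 / (Wop^[m] s).2.2.1 ≤ 1 := by
  intro s hs m hm
  obtain ⟨k, rfl⟩ : ∃ k, m = k + 2 := ⟨m - 2, by omega⟩
  have h2 : Wop^[2] s ∈ Pset := Q_to_P _ (S_to_Q s hs)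
  have hP : Wop^[k + 2] s ∈ Pset := by
    rw [Function.iterate_add_apply]
    exact P_iter k _ h2
  obtain ⟨hx, hy, hu, hv, hvu, hyx⟩ := hP
  refine ⟨hx, hu, div_nonneg hy hx.le, ?_, div_nonneg hv hu.le, ?_⟩
  · rw [div_le_iff₀ hx]; linarith
  · rw [div_le_one hu]; exact hvu
end

section
/- Let (x,y,u,v) ∈ S^{2,2} with x > 0, u > 0, and set α = y/x, β = v/u. Then the image (x',y',u',v') = W(x,y,u,v) has x' > 0, u' > 0, and y'/x' and v'/u' depend only on α and β: y'/x' = (6β + 3α + 4αβ)/(6 + 3α) and v'/u' = (3α + 4αβ)/(6 + 6β + 3α + 4αβ). -/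
theorem stmt19 : ∀ p ∈ S22, 0 < p.1 → 0 < p.2.2.1 →
    let α := p.2.1 / p.1
    let β := p.2.2.2 / p.2.2.1
    0 < (Wop p).1 ∧ 0 < (Wop p).2.2.1 ∧
    (Wop p).2.1 / (Wop p).1 = (6*β + 3*α + 4*α*β)/(6 + 3*α) ∧
    (Wop p).2.2.2 / (Wop p).2.2.1 = (3*α + 4*α*β)/(6 + 6*β + 3*α + 4*α*β) := by
  rintro ⟨x, y, u, v⟩ ⟨hx, hy, hu, hv, hs, -, -⟩ hx0 hu0
  simp only [Wop, S22] at *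
  have hxy : (0:ℝ) < x + y := by linarith
  have huv : (0:ℝ) < u + v := by linarith
  have h1 : (0:ℝ) < 2*x*u + y*u := by positivity
  have h2 : (0:ℝ) < 6*x*u + 6*x*v + 3*y*u + 4*y*v := by positivity
  have h3 : (0:ℝ) < 6 + 6*(v/u) + 3*(y/x) + 4*(y/x)*(v/u) := by positivity
  have h4 : (0:ℝ) < 6 + 3*(y/x) := by positivity
  refine ⟨by positivity, by positivity, ?_, ?_⟩
  · rw [div_div_div_eq]
    field_simp
    ring
  · rw [div_div_div_eq]
    field_simp
end
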